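/- Let d ≥ 2 and let θ_1, …, θ_d ∈ [−π,π) be real numbers with Σ_{k=1}^d θ_k = 0 and (1/d)·Σ_{k=1}^d θ_k² = σ². For each positive integer m set p_m(z) := ∏_{k=1}^d (z − e^{iθ_k/√m}). Then for every k ∈ {0,1,…,d}, lim_{m→∞} ã_k(p_m)^m = exp(−k(d−k)σ²/(2(d−1))); equivalently, the polynomials p_m^{⊠_d m} converge coefficientwise to the unitary Hermite polynomial H_d(z; dσ²/(d−1)) as m → ∞, where H_d(z;t) := Σ_{k=0}^d (−1)^k · C(d,k) · exp(−tk(d−k)/(2d)) · z^{d−k} for t ≥ 0. -/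

import Mathlib

/-!
By Vieta's formulas, `ã_k(p_m)` is the average of `exp (i Θ_S / √m)` over the `k`-subsets `S`,
where `Θ_S = ∑_{j ∈ S} θ_j`. The `Θ_S` have mean zero, so the `m`-th power of this average
behaves like the characteristic function in the central limit theorem:
`(1 + (-Var Θ / 2 + o(1)) / m) ^ m → exp (-Var Θ / 2)`, and double counting gives
`Var Θ = k (d - k) σ² / (d - 1)`. Since `ã_k` is multiplicative for `⊠_d`, the coefficients of
`p_m^{⊠_d m}` are `(-1)^k C(d,k) ã_k(p_m)^m`, which converge to those of `H_d`.
-/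

open Finset Filter

/-- For `p(x) = Σ_{i=0}^d a_i x^{d-i}`, `atilde d p i = (-1)^i * (d.choose i)⁻¹ * a_i`. -/
noncomputable def atilde (d : ℕ) (p : Polynomial ℂ) (i : ℕ) : ℂ :=
  (-1) ^ i * ((d.choose i : ℂ))⁻¹ * p.coeff (d - i)

/-- Finite free multiplicative convolution of degree-`d` polynomials. -/
noncomputable def ffmul (d : ℕ) (p q : Polynomial ℂ) : Polynomial ℂ :=
  ∑ i ∈ Finset.range (d + 1),
    Polynomial.C ((-1) ^ i * (d.choose i : ℂ) * atilde d p i * atilde d q i) *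
      Polynomial.X ^ (d - i)

/-- The `m`-fold finite free multiplicative convolution power `p^{⊠_d m}`;
the empty convolution is the identity `(x-1)^d` for `⊠_d`. -/
noncomputable def ffpow (d : ℕ) (p : Polynomial ℂ) : ℕ → Polynomial ℂ
  | 0 => (Polynomial.X - 1) ^ d
  | m + 1 => ffmul d (ffpow d p m) p

/-- The unitary Hermite polynomial `H_d(z;t)`. -/
noncomputable def Hdpoly (d : ℕ) (t : ℝ) : Polynomial ℂ :=
  ∑ k ∈ Finset.range (d + 1),
    Polynomial.C ((-1) ^ k * (d.choose k : ℂ) *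
        ((Real.exp (-(t * (k : ℝ) * ((d : ℝ) - (k : ℝ)) / (2 * (d : ℝ))))) : ℂ)) *
      Polynomial.X ^ (d - k)

open Polynomial Complex

section Coefficients

variable {R : Type*} [Semiring R] (d : ℕ) (c : ℕ → R)

theorem coeff_sum_C_mul_X_pow_sub {i : ℕ} (hi : i ≤ d) :
    (∑ j ∈ range (d + 1), C (c j) * X ^ (d - j)).coeff (d - i) = c i := by
  rw [finsetSum_coeff, sum_eq_single_of_mem i (mem_range.2 (by omega))]
  · simp
  · intro j hj hji
    rw [coeff_C_mul_X_pow, if_neg (by grind)]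

theorem coeff_sum_C_mul_X_pow_sub_of_lt {j : ℕ} (hj : d < j) :
    (∑ i ∈ range (d + 1), C (c i) * X ^ (d - i)).coeff j = 0 := by
  rw [finsetSum_coeff]
  exact sum_eq_zero fun i _ => by rw [coeff_C_mul_X_pow, if_neg (by omega)]

end Coefficients

theorem neg_one_pow_mul_choose_inv_mul_cancel {d i : ℕ} (hi : i ≤ d) (a : ℂ) :
    (-1) ^ i * (d.choose i : ℂ)⁻¹ * ((-1) ^ i * d.choose i * a) = a := by
  have : (d.choose i : ℂ) ≠ 0 := by exact_mod_cast (Nat.choose_pos hi).ne'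
  calc (-1) ^ i * (d.choose i : ℂ)⁻¹ * ((-1) ^ i * d.choose i * a)
      = ((-1) ^ i * (-1) ^ i) * ((d.choose i : ℂ)⁻¹ * d.choose i) * a := by ring
    _ = a := by rw [← mul_pow]; simp [this]

theorem atilde_eq_of_coeff {d i : ℕ} (hi : i ≤ d) {p : ℂ[X]} {a : ℂ}
    (h : p.coeff (d - i) = (-1) ^ i * d.choose i * a) : atilde d p i = a := by
  rw [atilde, h, neg_one_pow_mul_choose_inv_mul_cancel hi]

theorem coeff_eq_atilde {d i : ℕ} (hi : i ≤ d) (p : ℂ[X]) :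
    p.coeff (d - i) = (-1) ^ i * d.choose i * atilde d p i := by
  have : (d.choose i : ℂ) ≠ 0 := by exact_mod_cast (Nat.choose_pos hi).ne'
  rw [atilde, ← mul_assoc, ← mul_assoc, mul_assoc _ _ ((-1) ^ i), mul_comm (d.choose i : ℂ),
    ← mul_assoc, ← mul_pow]
  field_simp
  simp

theorem atilde_ffmul {d i : ℕ} (hi : i ≤ d) (p q : ℂ[X]) :
    atilde d (ffmul d p q) i = atilde d p i * atilde d q i :=
  atilde_eq_of_coeff hi <| by rw [ffmul, coeff_sum_C_mul_X_pow_sub d _ hi, mul_assoc]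

theorem atilde_X_sub_one_pow {d i : ℕ} (hi : i ≤ d) : atilde d ((X - 1 : ℂ[X]) ^ d) i = 1 :=
  atilde_eq_of_coeff hi <| by
    rw [← C_1, sub_eq_add_neg, ← C_neg, coeff_X_add_C_pow, Nat.sub_sub_self hi,
      Nat.choose_symm hi, mul_one]

theorem atilde_ffpow {d i : ℕ} (hi : i ≤ d) (p : ℂ[X]) (m : ℕ) :
    atilde d (ffpow d p m) i = atilde d p i ^ m := by
  induction m with
  | zero => exact atilde_X_sub_one_pow hi
  | succ m ih => rw [ffpow, atilde_ffmul hi, ih, pow_succ]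

theorem coeff_ffpow_of_lt {d j : ℕ} (hj : d < j) (p : ℂ[X]) (m : ℕ) :
    (ffpow d p m).coeff j = 0 := by
  cases m with
  | zero =>
    rw [ffpow, ← C_1, sub_eq_add_neg, ← C_neg, coeff_X_add_C_pow, Nat.choose_eq_zero_of_lt hj,
      Nat.cast_zero, mul_zero]
  | succ m => exact coeff_sum_C_mul_X_pow_sub_of_lt d _ hj

theorem atilde_prod_X_sub_C {ι : Type*} {d k : ℕ} (s : Finset ι) (hs : #s = d) (hk : k ≤ d)
    (r : ι → ℂ) :
    atilde d (∏ i ∈ s, (X - C (r i))) k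
      = (d.choose k : ℂ)⁻¹ * ∑ t ∈ s.powersetCard k, ∏ i ∈ t, r i := by
  have hprod : ∏ i ∈ s, (X - C (r i)) = ((s.val.map r).map fun a => X - C a).prod := by
    rw [Multiset.map_map]; rfl
  have hcard : Multiset.card (s.val.map r) = d := by simpa using hs
  rw [atilde, hprod, Multiset.prod_X_sub_C_coeff _ (by omega), hcard, Nat.sub_sub_self hk,
    Finset.esymm_map_val]
  calc (-1) ^ k * (d.choose k : ℂ)⁻¹ * ((-1) ^ k * ∑ t ∈ s.powersetCard k, ∏ i ∈ t, r i)
      = ((-1) ^ k * (-1) ^ k) * (d.choose k : ℂ)⁻¹ * ∑ t ∈ s.powersetCard k, ∏ i ∈ t, r i := by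
        ring
    _ = _ := by rw [← mul_pow]; simp

section SubsetSums

variable {ι : Type*} [DecidableEq ι]

theorem sum_powersetCard_succ_filter_mem {M : Type*} [AddCommMonoid M] {s : Finset ι} {j : ι}
    (hj : j ∈ s) (k : ℕ) (g : Finset ι → M) :
    ∑ S ∈ s.powersetCard (k + 1) with j ∈ S, g S
      = ∑ T ∈ (s.erase j).powersetCard k, g (insert j T) := by
  have hj' : j ∉ s.erase j := notMem_erase j s
  conv_lhs => rw [← insert_erase hj, powersetCard_succ_insert hj', filter_union]
  rw [filter_false_of_mem fun S hS => notMem_mono (mem_powersetCard.1 hS).1 hj', empty_union,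
    filter_true_of_mem, sum_image]
  · exact insert_erase_invOn.2.injOn.mono fun T hT => notMem_mono (mem_powersetCard.1 hT).1 hj'
  · simp only [mem_image]
    rintro _ ⟨T, -, rfl⟩
    exact mem_insert_self j T

theorem sum_powersetCard_sum_comm {M : Type*} [AddCommMonoid M] (s : Finset ι) (k : ℕ)
    (g : ι → Finset ι → M) :
    ∑ S ∈ s.powersetCard k, ∑ j ∈ S, g j S = ∑ j ∈ s, ∑ S ∈ s.powersetCard k with j ∈ S, g j S :=
  sum_comm' fun S j => by simp only [mem_filter, mem_powersetCard]; grind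

theorem sum_powersetCard_succ_sum {M : Type*} [AddCommMonoid M] (s : Finset ι) (k : ℕ)
    (f : ι → M) :
    ∑ S ∈ s.powersetCard (k + 1), ∑ j ∈ S, f j = (#s - 1).choose k • ∑ j ∈ s, f j := by
  rw [sum_powersetCard_sum_comm, smul_sum]
  refine sum_congr rfl fun j hj => ?_
  rw [sum_powersetCard_succ_filter_mem hj, sum_const, card_powersetCard, card_erase_of_mem hj]

theorem sum_powersetCard_succ_sum_sq {R : Type*} [CommRing R] {s : Finset ι} (hs : 2 ≤ #s)
    (k : ℕ) {f : ι → R} (hf : ∑ j ∈ s, f j = 0) :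
    ∑ S ∈ s.powersetCard (k + 1), (∑ j ∈ S, f j) ^ 2 = (#s - 2).choose k • ∑ j ∈ s, f j ^ 2 := by
  have hrow : ∀ j ∈ s, ∑ S ∈ s.powersetCard (k + 1) with j ∈ S, ∑ l ∈ S, f l
      = (#s - 2).choose k • f j := by
    intro j hj
    have hj' : j ∉ s.erase j := notMem_erase j s
    rw [sum_powersetCard_succ_filter_mem hj,
      sum_congr rfl fun T hT => sum_insert (notMem_mono (mem_powersetCard.1 hT).1 hj'),
      sum_add_distrib, sum_const, card_powersetCard, card_erase_of_mem hj]
    cases k with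
    | zero => simp
    | succ k =>
      have herase : ∑ l ∈ s.erase j, f l = -f j := by
        rw [← add_sum_erase s f hj] at hf
        exact eq_neg_of_add_eq_zero_right hf
      rw [sum_powersetCard_succ_sum, herase, card_erase_of_mem hj,
        show #s - 1 = #s - 2 + 1 by omega, Nat.choose_succ_succ', add_smul, smul_neg,
        Nat.add_sub_cancel]
      abel
  calc ∑ S ∈ s.powersetCard (k + 1), (∑ j ∈ S, f j) ^ 2
      = ∑ S ∈ s.powersetCard (k + 1), ∑ j ∈ S, f j * ∑ l ∈ S, f l := by simp only [sq, sum_mul]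
    _ = ∑ j ∈ s, f j * ∑ S ∈ s.powersetCard (k + 1) with j ∈ S, ∑ l ∈ S, f l := by
        rw [sum_powersetCard_sum_comm]; simp only [mul_sum]
    _ = (#s - 2).choose k • ∑ j ∈ s, f j ^ 2 := by
        rw [smul_sum]
        exact sum_congr rfl fun j hj => by rw [hrow j hj, mul_smul_comm, sq]

end SubsetSums

theorem card_mul_card_sub_one_mul_sum_powersetCard_sum_sq {ι R : Type*} [DecidableEq ι]
    [CommRing R] {s : Finset ι} (hs : 2 ≤ #s) {k : ℕ} (hk : k ≤ #s) {f : ι → R}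
    (hf : ∑ j ∈ s, f j = 0) :
    (#s : R) * (#s - 1) * ∑ S ∈ s.powersetCard k, (∑ j ∈ S, f j) ^ 2
      = k * (#s - k) * (#s).choose k * ∑ j ∈ s, f j ^ 2 := by
  cases k with
  | zero => simp
  | succ k =>
    obtain ⟨n, hn⟩ : ∃ n, #s = n + 2 := ⟨#s - 2, by omega⟩
    rw [sum_powersetCard_succ_sum_sq hs k hf, nsmul_eq_mul, hn, Nat.add_sub_cancel]
    have h1 := congrArg (Nat.cast : ℕ → R) (Nat.add_one_mul_choose_eq (n + 1) k)
    have h2 := congrArg (Nat.cast : ℕ → R) (Nat.choose_mul_succ_eq n k)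
    push_cast [Nat.cast_sub (show k ≤ n + 1 by omega)] at h1 h2 ⊢
    linear_combination (∑ j ∈ s, f j ^ 2) * ((n + 2 : R) * h2 + (n + 1 - k) * h1)

theorem tendsto_natCast_mul_cexp_sub_one_sub (a : ℝ) :
    Tendsto (fun m : ℕ => (m : ℂ) * (cexp (I * ↑(a / √m)) - 1 - I * ↑(a / √m))) atTop
      (nhds (-(a : ℂ) ^ 2 / 2)) := by
  rw [← tendsto_sub_nhds_zero_iff]
  have hu : Tendsto (fun m : ℕ => (√m)⁻¹) atTop (nhds 0) :=
    tendsto_inv_atTop_zero.comp (Real.tendsto_sqrt_atTop.comp tendsto_natCast_atTop_atTop)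
  have hbound : Tendsto (fun m : ℕ => |a| ^ 3 * Real.exp (|a| * (√m)⁻¹) * (√m)⁻¹) atTop
      (nhds 0) := by
    have hF : Continuous fun u : ℝ => |a| ^ 3 * Real.exp (|a| * u) * u := by fun_prop
    have := (hF.tendsto 0).comp hu
    rwa [mul_zero] at this
  refine squeeze_zero_norm' ?_ hbound
  filter_upwards [eventually_gt_atTop 0] with m hm
  set z : ℂ := I * ↑(a / √m)
  have hm' : (0 : ℝ) < m := by exact_mod_cast hm
  have hsqrt : 0 < √(m : ℝ) := Real.sqrt_pos.2 hm'
  have hz : ‖z‖ = |a| * (√m)⁻¹ := by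
    simp [z, abs_of_pos hsqrt, div_eq_mul_inv]
  -- `m z² = -a²` turns the deviation into `m` times the cubic Taylor remainder of `exp` at `z`
  have hdev : (m : ℂ) * (cexp z - 1 - z) - -(a : ℂ) ^ 2 / 2
      = m * (cexp z - ∑ n ∈ range 3, z ^ n / n.factorial) := by
    have hsq : (m : ℂ) * z ^ 2 = -(a : ℂ) ^ 2 := by
      have : ((√m : ℝ) : ℂ) ^ 2 = m := by exact_mod_cast Real.sq_sqrt hm'.le
      simp only [z, mul_pow, I_sq, ofReal_div, div_pow, this]
      field_simp [(Nat.cast_ne_zero.2 hm.ne' : (m : ℂ) ≠ 0)]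
    simp only [sum_range_succ, sum_range_zero, Nat.factorial]
    linear_combination hsq / 2
  rw [hdev, norm_mul, Complex.norm_natCast]
  calc (m : ℝ) * ‖cexp z - ∑ n ∈ range 3, z ^ n / n.factorial‖
      ≤ m * (‖z‖ ^ 3 * Real.exp ‖z‖) := by gcongr; exact norm_exp_sub_sum_le_norm_mul_exp z 3
    _ = |a| ^ 3 * Real.exp (|a| * (√m)⁻¹) * (√m)⁻¹ := by
        rw [hz, mul_pow, inv_pow, show √(m : ℝ) ^ 3 = m * √m by rw [pow_succ, Real.sq_sqrt hm'.le]]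
        field_simp

theorem tendsto_average_cexp_div_sqrt_pow {κ : Type*} {𝒮 : Finset κ} (h𝒮 : 𝒮.Nonempty)
    {x : κ → ℝ} (hx : ∑ S ∈ 𝒮, x S = 0) :
    Tendsto (fun m : ℕ => ((#𝒮 : ℂ)⁻¹ * ∑ S ∈ 𝒮, cexp (I * ↑(x S / √m))) ^ m) atTop
      (nhds ↑(Real.exp (-(∑ S ∈ 𝒮, x S ^ 2) / (2 * #𝒮)))) := by
  have hN : (#𝒮 : ℂ) ≠ 0 := by exact_mod_cast h𝒮.card_pos.ne'
  set g : ℕ → ℂ := fun m => (#𝒮 : ℂ)⁻¹ * ∑ S ∈ 𝒮, (cexp (I * ↑(x S / √m)) - 1 - I * ↑(x S / √m))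
  -- the first-order terms cancel because the `x S` have mean zero
  have hA : ∀ m : ℕ, (#𝒮 : ℂ)⁻¹ * ∑ S ∈ 𝒮, cexp (I * ↑(x S / √m)) = 1 + g m := by
    intro m
    have hlin : ∑ S ∈ 𝒮, I * ((x S / √m : ℝ) : ℂ) = 0 := by
      rw [← mul_sum, ← ofReal_sum, ← sum_div, hx]; simp
    simp only [g, sum_sub_distrib, hlin, sum_const, nsmul_eq_mul, mul_one, mul_sub,
      inv_mul_cancel₀ hN]
    ring
  simp only [hA, ofReal_exp]
  refine tendsto_one_add_pow_exp_of_tendsto ?_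
  have hlim := (tendsto_finsetSum 𝒮 fun S _ => tendsto_natCast_mul_cexp_sub_one_sub (x S)).const_mul
    (#𝒮 : ℂ)⁻¹
  convert hlim using 1
  · ext m
    simp only [g, mul_sum]
    exact sum_congr rfl fun S _ => by ring
  · push_cast
    rw [← sum_div, ← sum_neg_distrib]
    field_simp

theorem tendsto_atilde_prod_X_sub_cexp_pow {d : ℕ} (hd : 2 ≤ d) {θ : Fin d → ℝ}
    (hmean : ∑ i, θ i = 0) {k : ℕ} (hk : k ≤ d) :
    Tendsto (fun m : ℕ => atilde d (∏ i, (X - C (cexp (I * ↑(θ i / √m))))) k ^ m) atTop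
      (nhds ↑(Real.exp (-(k * (d - k) * ((∑ i, θ i ^ 2) / d) / (2 * (d - 1)))))) := by
  have hcard : #(univ : Finset (Fin d)) = d := card_fin d
  set 𝒮 := (univ : Finset (Fin d)).powersetCard k
  have hA : ∀ m : ℕ, atilde d (∏ i, (X - C (cexp (I * ↑(θ i / √m))))) k
      = (#𝒮 : ℂ)⁻¹ * ∑ S ∈ 𝒮, cexp (I * ↑((∑ i ∈ S, θ i) / √m)) := by
    intro m
    rw [atilde_prod_X_sub_C _ hcard hk, card_powersetCard, hcard]
    refine congrArg _ (sum_congr rfl fun S _ => ?_)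
    rw [← exp_sum, sum_div]
    push_cast
    rw [mul_sum]
  have hmean' : ∑ S ∈ 𝒮, ∑ i ∈ S, θ i = 0 := by
    cases k with
    | zero => simp [𝒮]
    | succ k => rw [sum_powersetCard_succ_sum, hmean, smul_zero]
  have hexp : -(∑ S ∈ 𝒮, (∑ i ∈ S, θ i) ^ 2) / (2 * #𝒮)
      = -(k * (d - k) * ((∑ i, θ i ^ 2) / d) / (2 * (d - 1))) := by
    have hmoment : (d : ℝ) * (d - 1) * ∑ S ∈ 𝒮, (∑ i ∈ S, θ i) ^ 2
        = k * (d - k) * d.choose k * ∑ i, θ i ^ 2 := by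
      simpa only [hcard] using
        card_mul_card_sub_one_mul_sum_powersetCard_sum_sq (by omega) (by omega) hmean
    have hd0 : (d : ℝ) ≠ 0 := by exact_mod_cast (by omega : d ≠ 0)
    have hd1 : (d : ℝ) - 1 ≠ 0 := by
      rw [sub_ne_zero]; exact_mod_cast (by omega : d ≠ 1)
    have hchoose : (d.choose k : ℝ) ≠ 0 := by exact_mod_cast (Nat.choose_pos hk).ne'
    rw [card_powersetCard, hcard]
    field_simp
    linear_combination -hmoment
  have hclt := tendsto_average_cexp_div_sqrt_pow (powersetCard_nonempty.2 (by omega)) hmean'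
  rw [hexp] at hclt
  exact hclt.congr fun m => by rw [hA]

theorem tendsto_coeff_ffpow_Hdpoly {d : ℕ} {q : ℕ → ℂ[X]} {t : ℝ}
    (h : ∀ k ≤ d, Tendsto (fun m => atilde d (q m) k ^ m) atTop
      (nhds ↑(Real.exp (-(t * k * (d - k) / (2 * d)))))) (j : ℕ) :
    Tendsto (fun m => (ffpow d (q m) m).coeff j) atTop (nhds ((Hdpoly d t).coeff j)) := by
  rcases le_or_gt j d with hj | hj
  · obtain ⟨i, hi, rfl⟩ : ∃ i ≤ d, j = d - i := ⟨d - j, by omega, by omega⟩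
    rw [Hdpoly, coeff_sum_C_mul_X_pow_sub d _ hi]
    simp_rw [coeff_eq_atilde hi, atilde_ffpow hi]
    exact (h i hi).const_mul _
  · simp_rw [coeff_ffpow_of_lt hj, Hdpoly, coeff_sum_C_mul_X_pow_sub_of_lt d _ hj]
    exact tendsto_const_nhds

theorem statement17_general (d : ℕ) (hd : 2 ≤ d) (θ : Fin d → ℝ) (σ2 : ℝ)
    (hmean : ∑ k, θ k = 0) (hvar : (∑ k, θ k ^ 2) / (d : ℝ) = σ2)
    (p : ℕ → Polynomial ℂ)
    (hp : ∀ m, p m = ∏ k, (Polynomial.X -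
      Polynomial.C (Complex.exp (Complex.I * ((θ k / Real.sqrt (m : ℝ) : ℝ) : ℂ))))) :
    (∀ k ≤ d, Tendsto (fun m => atilde d (p m) k ^ m) atTop
        (nhds (((Real.exp (-((k : ℝ) * ((d : ℝ) - (k : ℝ)) * σ2 /
          (2 * ((d : ℝ) - 1)))) : ℝ) : ℂ)))) ∧
    (∀ j, Tendsto (fun m => (ffpow d (p m) m).coeff j) atTop
        (nhds ((Hdpoly d ((d : ℝ) * σ2 / ((d : ℝ) - 1))).coeff j))) := by
  have hatilde : ∀ k ≤ d, Tendsto (fun m => atilde d (p m) k ^ m) atTop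
      (nhds (((Real.exp (-((k : ℝ) * ((d : ℝ) - (k : ℝ)) * σ2 /
        (2 * ((d : ℝ) - 1)))) : ℝ) : ℂ))) := fun k hk => by
    simpa only [hp, hvar] using tendsto_atilde_prod_X_sub_cexp_pow hd hmean hk
  refine ⟨hatilde, tendsto_coeff_ffpow_Hdpoly fun k hk => ?_⟩
  have hd0 : (d : ℝ) ≠ 0 := by exact_mod_cast (by omega : d ≠ 0)
  convert hatilde k hk using 5
  field_simp

theorem statement17 (d : ℕ) (hd : 2 ≤ d) (θ : Fin d → ℝ) (σ2 : ℝ)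
    (hrange : ∀ k, θ k ∈ Set.Ico (-Real.pi) Real.pi)
    (hmean : ∑ k, θ k = 0) (hvar : (∑ k, θ k ^ 2) / (d : ℝ) = σ2)
    (p : ℕ → Polynomial ℂ)
    (hp : ∀ m, p m = ∏ k, (Polynomial.X -
      Polynomial.C (Complex.exp (Complex.I * ((θ k / Real.sqrt (m : ℝ) : ℝ) : ℂ))))) :
    (∀ k ≤ d, Tendsto (fun m => atilde d (p m) k ^ m) atTop
        (nhds (((Real.exp (-((k : ℝ) * ((d : ℝ) - (k : ℝ)) * σ2 /
          (2 * ((d : ℝ) - 1)))) : ℝ) : ℂ)))) ∧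
    (∀ j, Tendsto (fun m => (ffpow d (p m) m).coeff j) atTop
        (nhds ((Hdpoly d ((d : ℝ) * σ2 / ((d : ℝ) - 1))).coeff j))) :=
  statement17_general d hd θ σ2 hmean hvar p hp
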